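/- Let Σ and Γ be finite alphabets, let L ⊆ Σ* be a semilinear language, and for each letter a ∈ Σ let L_a ⊆ Γ* be a semilinear language. Then the substitution σ(L) = {u₁u₂⋯u_n : n ≥ 0, a₁a₂⋯a_n ∈ L with each a_i ∈ Σ, and u_i ∈ L_{a_i} for each i} is a semilinear language over Γ. -/

import Mathlib

/-- A set `Q ⊆ ℕ^α` is linear if it has a constant vector `v₀` and finitely many
period vectors `v₁, …, v_l` with `Q = {v₀ + i₁v₁ + ⋯ + i_l v_l}`. -/
def IsLinearSet' {α : Type*} (Q : Set (α → ℕ)) : Prop :=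
  ∃ (v₀ : α → ℕ) (l : ℕ) (v : Fin l → α → ℕ),
    Q = { x | ∃ c : Fin l → ℕ, x = v₀ + ∑ j, c j • v j }

/-- A set is semilinear if it is a finite union of linear sets. -/
def IsSemilinearSet' {α : Type*} (Q : Set (α → ℕ)) : Prop :=
  ∃ (n : ℕ) (Qs : Fin n → Set (α → ℕ)),
    (∀ i, IsLinearSet' (Qs i)) ∧ Q = ⋃ i, Qs i

open Classical in
/-- The Parikh image of a word: `parikhWord w a = |w|_a`. -/
noncomputable def parikhWord {σ : Type*} (w : List σ) : σ → ℕ :=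
  fun a => w.count a

/-- A language is semilinear if its Parikh image is a semilinear set. -/
def IsSemilinearLanguage {σ : Type*} (L : Set (List σ)) : Prop :=
  IsSemilinearSet' (parikhWord '' L)

/-!
The Parikh image of `σ(L)` depends only on `ψ(L)`: it is `⋃ x ∈ ψ(L), F x`, where
`F x = ∑ a, x a • ψ(L_a)` is a sum of `x a`-fold sumsets. The map `F` is additive from `ℕ^Σ` to
sets of vectors under Minkowski addition, so over a linear set `v₀ + ⟨v₁, …, v_l⟩` the union is
`F v₀ + closure (F v₁ ∪ ⋯ ∪ F v_l)`. Semilinear sets are closed under finite unions, Minkowski sums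
and additive closure, and each `F x` is semilinear, hence so is the union.
-/

open Set Pointwise

section Linear

variable {α : Type*}

theorem setOf_linearCombination_eq_vadd_closure {l : ℕ} (v₀ : α → ℕ) (v : Fin l → α → ℕ) :
    {x | ∃ c : Fin l → ℕ, x = v₀ + ∑ j, c j • v j} =
      v₀ +ᵥ (AddSubmonoid.closure (range v) : Set (α → ℕ)) := by
  ext x
  simp only [mem_ofPred_eq, mem_vadd_set, SetLike.mem_coe,
    AddSubmonoid.mem_closure_range_iff_of_fintype, vadd_eq_add]
  constructor
  · rintro ⟨c, rfl⟩
    exact ⟨_, ⟨c, rfl⟩, rfl⟩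
  · rintro ⟨_, ⟨c, rfl⟩, rfl⟩
    exact ⟨c, rfl⟩

theorem isLinearSet'_iff_isLinearSet {Q : Set (α → ℕ)} : IsLinearSet' Q ↔ IsLinearSet Q := by
  simp only [IsLinearSet', setOf_linearCombination_eq_vadd_closure, IsLinearSet]
  constructor
  · rintro ⟨v₀, l, v, rfl⟩
    exact ⟨v₀, range v, finite_range v, rfl⟩
  · rintro ⟨v₀, t, ht, rfl⟩
    obtain ⟨l, v, rfl⟩ := ht.fin_embedding
    exact ⟨v₀, l, v, rfl⟩

theorem isSemilinearSet'_iff_isSemilinearSet {Q : Set (α → ℕ)} :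
    IsSemilinearSet' Q ↔ IsSemilinearSet Q := by
  simp only [IsSemilinearSet', isLinearSet'_iff_isLinearSet, IsSemilinearSet]
  constructor
  · rintro ⟨n, Qs, hQs, rfl⟩
    exact ⟨range Qs, finite_range Qs, forall_mem_range.2 hQs, (sUnion_range Qs).symm⟩
  · rintro ⟨S, hS, hlin, rfl⟩
    obtain ⟨n, Qs, rfl⟩ := hS.fin_embedding
    exact ⟨n, Qs, forall_mem_range.1 hlin, sUnion_range Qs⟩

end Linear

section Sumset

variable {M N : Type*} [AddCommMonoid M] [AddCommMonoid N]

-- `n • s` is the `n`-fold sumset `s + ⋯ + s` (`Set.NSMul`), not the dilation `{n • x | x ∈ s}`.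
theorem IsSemilinearSet.nsmul {s : Set N} (hs : IsSemilinearSet s) (n : ℕ) :
    IsSemilinearSet (n • s) := by
  induction n with
  | zero => simp [← singleton_zero]
  | succ n ih => simpa [succ_nsmul] using ih.add hs

theorem biUnion_vadd_addMonoidHom (F : M →+ Set N) (a : M) (s : Set M) :
    ⋃ m ∈ a +ᵥ s, F m = F a + ⋃ m ∈ s, F m := by
  simp only [← image_vadd, biUnion_image, vadd_eq_add, map_add, add_iUnion]

theorem biUnion_closure_addMonoidHom (F : M →+ Set N) (t : Set M) :
    ⋃ m ∈ (AddSubmonoid.closure t : Set M), F m = AddSubmonoid.closure (⋃ m ∈ t, F m) := by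
  apply subset_antisymm
  · refine iUnion₂_subset fun m hm => ?_
    induction hm using AddSubmonoid.closure_induction with
    | mem m hm => exact subset_biUnion_of_mem (u := F) hm |>.trans AddSubmonoid.subset_closure
    | zero => simp [← singleton_zero]
    | add x y _ _ hx hy =>
      rw [map_add]
      rintro _ ⟨u, hu, v, hv, rfl⟩
      exact add_mem (hx hu) (hy hv)
  · let P : AddSubmonoid N :=
      { carrier := ⋃ m ∈ (AddSubmonoid.closure t : Set M), F m
        add_mem' := by
          simp only [mem_iUnion, SetLike.mem_coe]
          rintro _ _ ⟨x, hx, hu⟩ ⟨y, hy, hv⟩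
          exact ⟨x + y, add_mem hx hy, by rw [map_add]; exact add_mem_add hu hv⟩
        zero_mem' := mem_biUnion (zero_mem _) (by simp [← singleton_zero]) }
    exact (AddSubmonoid.closure_le (S := P)).2
      (biUnion_mono AddSubmonoid.subset_closure fun _ _ => subset_rfl)

theorem IsSemilinearSet.biUnion_addMonoidHom {F : M →+ Set N} (hF : ∀ m, IsSemilinearSet (F m))
    {s : Set M} (hs : IsSemilinearSet s) : IsSemilinearSet (⋃ m ∈ s, F m) := by
  obtain ⟨S, hS, hlin, rfl⟩ := hs
  simp only [sUnion_eq_biUnion, biUnion_iUnion]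
  refine IsSemilinearSet.biUnion hS fun s hs => ?_
  obtain ⟨a, t, ht, rfl⟩ := hlin s hs
  rw [biUnion_vadd_addMonoidHom, biUnion_closure_addMonoidHom]
  exact (hF a).add (IsSemilinearSet.biUnion ht fun m _ => hF m).closure

end Sumset

theorem isSemilinearSet_fintypeLinearCombination {σ N : Type*} [Fintype σ] [AddCommMonoid N]
    {S : σ → Set N} (hS : ∀ a, IsSemilinearSet (S a)) (x : σ → ℕ) :
    IsSemilinearSet (Fintype.linearCombination ℕ S x) := by
  rw [Fintype.linearCombination_apply]
  exact Finset.sum_induction _ IsSemilinearSet (fun _ _ => IsSemilinearSet.add)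
    (by simp [← singleton_zero]) fun a _ => (hS a).nsmul (x a)

section Parikh

variable {σ : Type*}

theorem parikhWord_nil : parikhWord ([] : List σ) = 0 := rfl

theorem parikhWord_append (u v : List σ) : parikhWord (u ++ v) = parikhWord u + parikhWord v := by
  funext a
  simp [parikhWord]

theorem parikhWord_cons [DecidableEq σ] (a : σ) (w : List σ) :
    parikhWord (a :: w) = Pi.single a 1 + parikhWord w := by
  funext b
  by_cases h : b = a
  · subst h; simp [parikhWord, add_comm]
  · simp [parikhWord, h, Ne.symm h]

end Parikh

section Substitution

variable {σ γ : Type*} (f : σ → Set (List γ))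

def substWord (w : List σ) : Set (List γ) :=
  {u | ∃ ws : List (σ × List γ), ws.map Prod.fst = w ∧ (∀ p ∈ ws, p.2 ∈ f p.1) ∧
    u = (ws.map Prod.snd).flatten}

theorem substWord_nil : substWord f [] = {[]} := by
  simp [substWord]

theorem substWord_cons (a : σ) (w : List σ) :
    substWord f (a :: w) = image2 (· ++ ·) (f a) (substWord f w) := by
  ext u
  constructor
  · rintro ⟨_ | ⟨⟨b, v⟩, ws⟩, hw, hmem, rfl⟩
    · simp at hw
    · simp only [List.map_cons, List.cons.injEq] at hw
      obtain ⟨rfl, hw⟩ := hw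
      simp only [List.forall_mem_cons] at hmem
      exact ⟨v, hmem.1, _, ⟨ws, hw, hmem.2, rfl⟩, rfl⟩
  · rintro ⟨v, hv, _, ⟨ws, rfl, hmem, rfl⟩, rfl⟩
    exact ⟨(a, v) :: ws, rfl, List.forall_mem_cons.2 ⟨hv, hmem⟩, rfl⟩

theorem image_parikhWord_substWord [Fintype σ] (w : List σ) :
    parikhWord '' substWord f w =
      Fintype.linearCombination ℕ (fun a => parikhWord '' f a) (parikhWord w) := by
  classical
  induction w with
  | nil => simp [substWord_nil, parikhWord_nil, singleton_zero]
  | cons a w ih =>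
    rw [substWord_cons, image_image2_distrib parikhWord_append, image2_add, ih, parikhWord_cons,
      map_add, Fintype.linearCombination_apply_single, one_smul]

end Substitution

theorem semilinear_substitution_general {σ γ : Type*} [Fintype σ]
    (L : Set (List σ)) (f : σ → Set (List γ))
    (hL : IsSemilinearLanguage L) (hf : ∀ a : σ, IsSemilinearLanguage (f a)) :
    IsSemilinearLanguage
      { u : List γ | ∃ ws : List (σ × List γ),
          (ws.map Prod.fst) ∈ L ∧ (∀ p ∈ ws, p.2 ∈ f p.1) ∧
          u = (ws.map Prod.snd).flatten } := by
  have hsubst : { u : List γ | ∃ ws : List (σ × List γ),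
      (ws.map Prod.fst) ∈ L ∧ (∀ p ∈ ws, p.2 ∈ f p.1) ∧ u = (ws.map Prod.snd).flatten } =
      ⋃ w ∈ L, substWord f w := by
    ext u
    simp only [substWord, mem_iUnion, mem_ofPred_eq]
    grind
  unfold IsSemilinearLanguage at hL hf ⊢
  simp_rw [isSemilinearSet'_iff_isSemilinearSet] at hL hf ⊢
  rw [hsubst, image_iUnion₂]
  simp_rw [image_parikhWord_substWord]
  simpa only [biUnion_image, LinearMap.toAddMonoidHom_coe] using
    hL.biUnion_addMonoidHom
      (F := (Fintype.linearCombination ℕ fun a => parikhWord '' f a).toAddMonoidHom)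
      (isSemilinearSet_fintypeLinearCombination hf)

/-- the substitution of semilinear languages L_a into a semilinear
language L is semilinear. σ(L) is modeled as the set of joins of lists of words
u_i ∈ L_{a_i} indexed along a word a₁⋯a_n ∈ L. -/
theorem semilinear_substitution {σ γ : Type*} [Fintype σ] [Fintype γ]
    (L : Set (List σ)) (f : σ → Set (List γ))
    (hL : IsSemilinearLanguage L) (hf : ∀ a : σ, IsSemilinearLanguage (f a)) :
    IsSemilinearLanguage
      { u : List γ | ∃ ws : List (σ × List γ),
          (ws.map Prod.fst) ∈ L ∧ (∀ p ∈ ws, p.2 ∈ f p.1) ∧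
          u = (ws.map Prod.snd).flatten } :=
  semilinear_substitution_general L f hL hf
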